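/- arXiv:2403.10610 — 3 statements merged into one kernel-verified Lean document; each statement's English description precedes it below -/
import Mathlib

section
/- Let p be a probability density on ℝ with p bounded, and fix K ∈ ℕ. Define, for a probability density q, the surrogate objective L(q) = E_{z¹,…,z^K iid ~ q}[ -∑ᵢ wⁱ log q(zⁱ) ], where wⁱ = (p(zⁱ)/q(zⁱ)) / ∑ⱼ (p(zʲ)/q(zʲ)) are self-normalized importance weights (interpreting the sum as well-defined on the event of positive total weight). Then for every c ∈ ℝ there exists δ > 0 such that for q_δ the uniform density on (0, δ), L(q_δ) = log δ < c. In particular there exists q ≠ p with L(q) < L(p). -/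
open MeasureTheory Real

/-- The wake-phase surrogate objective: `L(q) = E_{z¹,…,z^K iid ~ q}[ -∑ᵢ wⁱ log q(zⁱ) ]`
with self-normalized importance weights `wⁱ = (p(zⁱ)/q(zⁱ)) / ∑ⱼ (p(zʲ)/q(zʲ))` on the event
of positive total weight (and the convention of uniform weights `1/K` otherwise). -/
noncomputable def surrogate (K : ℕ) (p q : ℝ → ℝ) : ℝ :=
  ∫ z : Fin K → ℝ,
    (∏ j, q (z j)) *
      (-∑ i, (if 0 < ∑ j, p (z j) / q (z j)
          then (p (z i) / q (z i)) / ∑ j, p (z j) / q (z j)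
          else (1 : ℝ) / K) * Real.log (q (z i)))

/-- The uniform probability density on `(0, δ)`. -/
noncomputable def unifDensity (δ : ℝ) : ℝ → ℝ :=
  fun z => if z ∈ Set.Ioo 0 δ then 1 / δ else 0

/-! A proposal that is constant on its support makes `-∑ᵢ wⁱ log q(zⁱ)` equal to `-log` of that
constant whatever the weights are, so the surrogate ignores the target `p` entirely. For the
uniform density on `(0, δ)` this gives `L(q_δ) = log δ`, which tends to `-∞` as `δ → 0`. -/

noncomputable def selfNormalizedWeight (K : ℕ) (p q : ℝ → ℝ) (z : Fin K → ℝ) (i : Fin K) : ℝ :=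
  if 0 < ∑ j, p (z j) / q (z j)
  then (p (z i) / q (z i)) / ∑ j, p (z j) / q (z j)
  else (1 : ℝ) / K

lemma surrogate_eq_integral_selfNormalizedWeight (K : ℕ) (p q : ℝ → ℝ) :
    surrogate K p q =
      ∫ z : Fin K → ℝ, (∏ j, q (z j)) *
        (-∑ i, selfNormalizedWeight K p q z i * Real.log (q (z i))) :=
  rfl

lemma sum_selfNormalizedWeight {K : ℕ} (hK : 0 < K) (p q : ℝ → ℝ) (z : Fin K → ℝ) :
    ∑ i, selfNormalizedWeight K p q z i = 1 := by
  unfold selfNormalizedWeight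
  split_ifs with hpos
  · rw [← Finset.sum_div, div_self hpos.ne']
  · rw [Finset.sum_const, Finset.card_univ, Fintype.card_fin, nsmul_eq_mul, mul_one_div_cancel]
    exact Nat.cast_ne_zero.2 hK.ne'

lemma surrogate_eq_neg_log_of_const_on_support {K : ℕ} (hK : 0 < K) (p : ℝ → ℝ)
    {q : ℝ → ℝ} {c : ℝ} (hq : ∫ z, q z = 1) (hconst : ∀ z, q z ≠ 0 → q z = c) :
    surrogate K p q = -Real.log c := by
  have hintegrand : ∀ z : Fin K → ℝ,
      (∏ j, q (z j)) * (-∑ i, selfNormalizedWeight K p q z i * Real.log (q (z i)))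
        = (∏ j, q (z j)) * -Real.log c := by
    intro z
    rcases eq_or_ne (∏ j, q (z j)) 0 with hzero | hpos
    · rw [hzero, zero_mul, zero_mul]
    · have hlog : ∀ i, Real.log (q (z i)) = Real.log c := fun i =>
        congrArg Real.log (hconst _ (Finset.prod_ne_zero_iff.1 hpos i (Finset.mem_univ i)))
      simp only [hlog, ← Finset.sum_mul, sum_selfNormalizedWeight hK, one_mul]
  rw [surrogate_eq_integral_selfNormalizedWeight, integral_congr_ae (.of_forall hintegrand),
    integral_mul_const, volume_pi, integral_fintype_prod_eq_pow, hq, one_pow, one_mul]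

lemma unifDensity_eq_indicator (δ : ℝ) :
    unifDensity δ = (Set.Ioo 0 δ).indicator fun _ => 1 / δ := by
  funext z
  simp only [unifDensity, Set.indicator_apply]

lemma integral_unifDensity {δ : ℝ} (hδ : 0 < δ) : ∫ z, unifDensity δ z = 1 := by
  rw [unifDensity_eq_indicator, integral_indicator measurableSet_Ioo, setIntegral_const,
    measureReal_def, Real.volume_Ioo, sub_zero, ENNReal.toReal_ofReal hδ.le, smul_eq_mul,
    mul_one_div_cancel hδ.ne']

lemma unifDensity_of_mem {δ x : ℝ} (hx : x ∈ Set.Ioo 0 δ) : unifDensity δ x = 1 / δ :=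
  if_pos hx

lemma surrogate_unifDensity {K : ℕ} (hK : 0 < K) (p : ℝ → ℝ) {δ : ℝ} (hδ : 0 < δ) :
    surrogate K p (unifDensity δ) = Real.log δ := by
  have hconst : ∀ z, unifDensity δ z ≠ 0 → unifDensity δ z = 1 / δ := by
    intro z hz
    by_cases hmem : z ∈ Set.Ioo 0 δ
    · exact unifDensity_of_mem hmem
    · exact absurd (if_neg hmem) hz
  rw [surrogate_eq_neg_log_of_const_on_support hK p (integral_unifDensity hδ) hconst,
    one_div, Real.log_inv, neg_neg]

lemma unifDensity_injOn : Set.InjOn unifDensity (Set.Ioi 0) := by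
  intro δ₁ (hδ₁ : 0 < δ₁) δ₂ (hδ₂ : 0 < δ₂) heq
  have hx : ∀ {δ}, min δ₁ δ₂ ≤ δ → min δ₁ δ₂ / 2 ∈ Set.Ioo 0 δ := fun hle =>
    ⟨by positivity, by linarith [lt_min hδ₁ hδ₂]⟩
  have := congrFun heq (min δ₁ δ₂ / 2)
  rwa [unifDensity_of_mem (hx (min_le_left _ _)), unifDensity_of_mem (hx (min_le_right _ _)),
    one_div, one_div, inv_inj] at this

theorem stmt0_general (K : ℕ) (hK : 0 < K) (p : ℝ → ℝ) :
    (∀ c : ℝ, ∃ δ : ℝ, 0 < δ ∧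
      surrogate K p (unifDensity δ) = Real.log δ ∧ Real.log δ < c) ∧
    ∃ q : ℝ → ℝ, q ≠ p ∧ surrogate K p q < surrogate K p p := by
  have hbelow : ∀ c t, t < c → surrogate K p (unifDensity (exp t)) < c := fun c t ht => by
    rwa [surrogate_unifDensity hK p (exp_pos t), log_exp]
  refine ⟨fun c => ⟨exp (c - 1), exp_pos _, surrogate_unifDensity hK p (exp_pos _), ?_⟩, ?_⟩
  · rw [log_exp]; linarith
  set L := surrogate K p p
  -- Two distinct uniform proposals both beat `p`, and at most one of them is `p`.
  by_cases hp : unifDensity (exp (L - 1)) = p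
  · refine ⟨unifDensity (exp (L - 2)), fun hp' => ?_, hbelow L _ (by linarith)⟩
    have := unifDensity_injOn (exp_pos _) (exp_pos _) (hp.trans hp'.symm)
    linarith [exp_injective this]
  · exact ⟨_, hp, hbelow L _ (by linarith)⟩

theorem stmt0 (K : ℕ) (hK : 0 < K) (p : ℝ → ℝ)
    (hp_meas : Measurable p) (hp_nonneg : ∀ z, 0 ≤ p z)
    (hp_int : ∫ z, p z = 1) (hp_bdd : ∃ B : ℝ, ∀ z, p z ≤ B) :
    (∀ c : ℝ, ∃ δ : ℝ, 0 < δ ∧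
      surrogate K p (unifDensity δ) = Real.log δ ∧ Real.log δ < c) ∧
    ∃ q : ℝ → ℝ, q ≠ p ∧ surrogate K p q < surrogate K p p :=
  stmt0_general K hK p
end

section
/- Let (Ĉ_m)_{m≥1} be iid strictly positive integrable random variables with mean C > 0, and let X_M = Ĉ_M · S_M where S_M is bounded and (Ĉ_M, S_M) has the same law for all M with E[Ĉ_M S_M] = C·μ. Then the estimator ∇̂⁽ᶜ⁾_M = X_M / ( (1/M) ∑_{m=1}^M Ĉ_m ), where X_M is independent of (Ĉ_1, …, Ĉ_{M-1}), converges in distribution to X₁/C as M → ∞, and E[X₁/C] = μ; hence ∇̂⁽ᶜ⁾ is asymptotically unbiased but its variance does not tend to 0 (so it is not consistent unless X₁/C is a.s. constant). -/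
open MeasureTheory ProbabilityTheory Filter Topology BoundedContinuousFunction Real

/-! The averages `D_M` of the `Ĉ_m` tend to `C` almost surely by the strong law, hence so do
their inverses, and since the `X_M` all have the law of `X₁`, Slutsky's theorem gives
`X_M / D_M → X₁ / C` in distribution. If the variances of `X_M / D_M` tended to `0`, Chebyshev's
inequality would make the constants `E[X_M / D_M]` converge in distribution to `X₁ / C`; testing
against `arctan` and `(arctan - c)²` with `c = E[arctan (X₁ / C)]` then forces
`arctan (X₁ / C) = c` almost surely. Positivity of the `Ĉ_m` bounds `|X_M / D_M|` by `B M`, which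
is needed because `variance` is `0` off `L²`. -/

namespace MeasureTheory

variable {ι Ω Ω' : Type*} {mΩ : MeasurableSpace Ω} {mΩ' : MeasurableSpace Ω'}
  {P : Measure Ω} {P' : Measure Ω'} [IsProbabilityMeasure P] [IsProbabilityMeasure P']
  {l : Filter ι}

theorem exists_ae_eq_const_of_forall_tendsto_apply [l.NeBot] {m : ι → ℝ} {Z : Ω' → ℝ}
    (hZ : AEMeasurable Z P')
    (h : ∀ g : ℝ →ᵇ ℝ, Tendsto (fun i ↦ g (m i)) l (𝓝 (∫ ω, g (Z ω) ∂P'))) :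
    ∃ c, ∀ᵐ ω ∂P', Z ω = c := by
  let a : ℝ →ᵇ ℝ := .ofNormedAddCommGroup arctan continuous_arctan (π / 2)
    fun x ↦ abs_le.2 ⟨(neg_pi_div_two_lt_arctan x).le, (arctan_lt_pi_div_two x).le⟩
  set c := ∫ ω, a (Z ω) ∂P'
  let f : ℝ →ᵇ ℝ := (a - .const ℝ c) ^ 2
  have hf : ∀ x, f x = (arctan x - c) ^ 2 := fun x ↦ rfl
  have hf0 : ∫ ω, f (Z ω) ∂P' = 0 := by
    have ha : Tendsto (fun i ↦ arctan (m i)) l (𝓝 c) := h a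
    refine tendsto_nhds_unique (h f) ?_
    simpa [hf] using (ha.sub_const c).pow 2
  have hfZ : (fun ω ↦ f (Z ω)) =ᵐ[P'] 0 :=
    (integral_eq_zero_iff_of_nonneg (fun ω ↦ sq_nonneg _)
      ((f.integrable (P'.map Z)).comp_aemeasurable hZ)).1 hf0
  refine ⟨tan c, hfZ.mono fun ω hω ↦ ?_⟩
  have : arctan (Z ω) = c := by simpa [hf, sub_eq_zero] using hω
  rw [← this, tan_arctan]

theorem TendstoInDistribution.tendsto_integral_comp {X : ι → Ω → ℝ} {Z : Ω' → ℝ}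
    (h : TendstoInDistribution X l Z (fun _ ↦ P) P') (g : ℝ →ᵇ ℝ) :
    Tendsto (fun i ↦ ∫ ω, g (X i ω) ∂P) l (𝓝 (∫ ω, g (Z ω) ∂P')) := by
  have := ProbabilityMeasure.tendsto_iff_forall_integral_tendsto.1 h.tendsto g
  simp only [ProbabilityMeasure.coe_mk] at this
  simpa only [integral_map (h.forall_aemeasurable _) g.continuous.aestronglyMeasurable,
    integral_map h.aemeasurable_limit g.continuous.aestronglyMeasurable] using this

theorem tendstoInMeasure_integral_sub_of_tendsto_variance {X : ι → Ω → ℝ}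
    (hX : ∀ i, MemLp (X i) 2 P) (hvar : Tendsto (fun i ↦ variance (X i) P) l (𝓝 0)) :
    TendstoInMeasure P (fun i ω ↦ P[X i] - X i ω) l 0 := by
  refine tendstoInMeasure_iff_norm.2 fun ε hε ↦ ?_
  have hbound : Tendsto (fun i ↦ ENNReal.ofReal (variance (X i) P / ε ^ 2)) l (𝓝 0) := by
    simpa using ENNReal.tendsto_ofReal (hvar.div_const (ε ^ 2))
  refine tendsto_of_tendsto_of_tendsto_of_le_of_le tendsto_const_nhds hbound (fun _ ↦ zero_le)
    fun i ↦ ?_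
  simpa [Real.norm_eq_abs, abs_sub_comm] using meas_ge_le_variance_div_sq (hX i) hε

theorem TendstoInDistribution.exists_ae_eq_const_of_tendsto_variance [l.NeBot]
    [l.IsCountablyGenerated] {X : ι → Ω → ℝ} {Z : Ω' → ℝ}
    (h : TendstoInDistribution X l Z (fun _ ↦ P) P') (hX : ∀ i, MemLp (X i) 2 P)
    (hvar : Tendsto (fun i ↦ variance (X i) P) l (𝓝 0)) :
    ∃ c, ∀ᵐ ω ∂P', Z ω = c := by
  have hmean : TendstoInDistribution (fun i (_ : Ω) ↦ P[X i]) l Z (fun _ ↦ P) P' := by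
    refine tendstoInDistribution_of_tendstoInMeasure_sub _ Z h ?_ fun _ ↦ aemeasurable_const
    exact tendstoInMeasure_integral_sub_of_tendsto_variance hX hvar
  refine exists_ae_eq_const_of_forall_tendsto_apply (l := l) (m := fun i ↦ P[X i])
    h.aemeasurable_limit fun g ↦ ?_
  simpa using hmean.tendsto_integral_comp g

theorem TendstoInDistribution.div_of_ae_tendsto_const {X D : ℕ → Ω → ℝ} {Z : Ω' → ℝ} {c : ℝ}
    (h : TendstoInDistribution X atTop Z (fun _ ↦ P) P') (hD_meas : ∀ n, AEMeasurable (D n) P)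
    (hD : ∀ᵐ ω ∂P, Tendsto (fun n ↦ D n ω) atTop (𝓝 c)) (hc : c ≠ 0) :
    TendstoInDistribution (fun n ω ↦ X n ω / D n ω) atTop (fun ω ↦ Z ω / c) (fun _ ↦ P) P' := by
  have hinv : TendstoInMeasure P (fun n ω ↦ (D n ω)⁻¹) atTop fun _ ↦ c⁻¹ :=
    tendstoInMeasure_of_tendsto_ae (fun n ↦ (hD_meas n).inv.aestronglyMeasurable)
      (hD.mono fun _ hω ↦ hω.inv₀ hc)
  simpa only [div_eq_mul_inv] using h.continuous_comp_prodMk_of_tendstoInMeasure_const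
    (g := fun p : ℝ × ℝ ↦ p.1 * p.2) (by fun_prop) hinv fun n ↦ (hD_meas n).inv

end MeasureTheory

namespace ProbabilityTheory

theorem strong_law_ae_real_Icc {Ω : Type*} {mΩ : MeasurableSpace Ω} {P : Measure Ω}
    (X : ℕ → Ω → ℝ) (hint : Integrable (X 1) P)
    (hindep : Pairwise fun i j ↦ IndepFun (X i) (X j) P)
    (hident : ∀ i, IdentDistrib (X i) (X 1) P P) :
    ∀ᵐ ω ∂P, Tendsto (fun n : ℕ ↦ (∑ i ∈ Finset.Icc 1 n, X i ω) / n) atTop (𝓝 P[X 1]) := by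
  have := strong_law_ae_real (fun i ↦ X (i + 1)) hint (fun i j hij ↦ hindep (by omega))
    fun i ↦ hident (i + 1)
  filter_upwards [this] with ω hω
  convert hω using 3 with n
  rw [← Finset.Ico_add_one_right_eq_Icc, Finset.sum_Ico_eq_sum_range]
  simp [add_comm]

end ProbabilityTheory

theorem abs_mul_div_sum_div_le {a : ℕ → ℝ} {t : Finset ℕ} {k : ℕ} (hk : k ∈ t)
    (ha : ∀ i ∈ t, 0 < a i) {s B : ℝ} (hs : |s| ≤ B) (n : ℝ) :
    |a k * s / ((∑ i ∈ t, a i) / n)| ≤ B * |n| := by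
  have hak : a k ≤ ∑ i ∈ t, a i := Finset.single_le_sum (fun i hi ↦ (ha i hi).le) hk
  have hsum : 0 < ∑ i ∈ t, a i := (ha k hk).trans_le hak
  rw [div_div_eq_mul_div, abs_div, abs_of_pos hsum, div_le_iff₀ hsum, abs_mul, abs_mul,
    abs_of_pos (ha k hk)]
  calc a k * |s| * |n| ≤ (∑ i ∈ t, a i) * B * |n| := by gcongr
    _ = B * |n| * ∑ i ∈ t, a i := by ring

theorem stmt3_general {Ω : Type*} [MeasureSpace Ω] [IsProbabilityMeasure (ℙ : Measure Ω)]
    (Chat S : ℕ → Ω → ℝ)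
    (hChat_indep : iIndepFun Chat ℙ)
    (hChat_ident : ∀ m, IdentDistrib (Chat m) (Chat 1) ℙ ℙ)
    (hChat_pos : ∀ m, ∀ᵐ ω ∂ℙ, 0 < Chat m ω)
    (hChat_int : ∀ m, Integrable (Chat m) ℙ)
    (C μ : ℝ) (hC : 0 < C) (hEC : ∫ ω, Chat 1 ω ∂ℙ = C)
    (B : ℝ) (hS_bdd : ∀ m ω, |S m ω| ≤ B)
    (hpair_ident : ∀ m, 1 ≤ m → IdentDistrib (fun ω => (Chat m ω, S m ω))
      (fun ω => (Chat 1 ω, S 1 ω)) ℙ ℙ)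
    (hmean : ∫ ω, Chat 1 ω * S 1 ω ∂ℙ = C * μ) :
    (∀ g : BoundedContinuousFunction ℝ ℝ,
      Tendsto (fun M : ℕ => ∫ ω, g ((Chat M ω * S M ω) /
          ((∑ m ∈ Finset.Icc 1 M, Chat m ω) / M)) ∂ℙ)
        atTop (nhds (∫ ω, g (Chat 1 ω * S 1 ω / C) ∂ℙ))) ∧
    (∫ ω, Chat 1 ω * S 1 ω / C ∂ℙ = μ) ∧
    ((¬ ∃ c : ℝ, ∀ᵐ ω ∂ℙ, Chat 1 ω * S 1 ω / C = c) →
      ¬ Tendsto (fun M : ℕ => variance (fun ω => (Chat M ω * S M ω) /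
          ((∑ m ∈ Finset.Icc 1 M, Chat m ω) / M)) ℙ) atTop (nhds 0)) := by
  set X : ℕ → Ω → ℝ := fun n ω ↦ Chat (n + 1) ω * S (n + 1) ω
  set D : ℕ → Ω → ℝ := fun n ω ↦ (∑ m ∈ Finset.Icc 1 (n + 1), Chat m ω) / (n + 1 : ℕ)
  have hX_ident (n : ℕ) : IdentDistrib (X 0) (X n) ℙ ℙ :=
    ((hpair_ident (n + 1) (by omega)).comp (measurable_fst.mul measurable_snd)).symm
  have hX : TendstoInDistribution X atTop (X 0) (fun _ ↦ ℙ) ℙ :=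
    tendstoInDistribution_of_identDistrib 0 hX_ident (.refl (hX_ident 0).aemeasurable_fst)
  have hD_meas (n : ℕ) : AEMeasurable (D n) ℙ :=
    (Finset.aemeasurable_fun_sum _ fun m _ ↦ (hChat_int m).aemeasurable).div_const _
  have hD : ∀ᵐ ω ∂ℙ, Tendsto (fun n ↦ D n ω) atTop (𝓝 C) := by
    filter_upwards [strong_law_ae_real_Icc Chat (hChat_int 1)
      (fun i j hij ↦ hChat_indep.indepFun hij) hChat_ident] with ω hω
    rw [hEC] at hω
    exact hω.comp (tendsto_add_atTop_nat 1)
  have hR := hX.div_of_ae_tendsto_const hD_meas hD hC.ne'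
  have hR_L2 (n : ℕ) : MemLp (fun ω ↦ X n ω / D n ω) 2 ℙ := by
    refine MemLp.of_bound (hR.forall_aemeasurable n).aestronglyMeasurable
      (B * |((n + 1 : ℕ) : ℝ)|) ?_
    filter_upwards [ae_all_iff.2 hChat_pos] with ω hω
    exact abs_mul_div_sum_div_le (Finset.right_mem_Icc.2 (by omega)) (fun i _ ↦ hω i)
      (hS_bdd _ ω) _
  refine ⟨fun g ↦ (tendsto_add_atTop_iff_nat 1).1 (hR.tendsto_integral_comp g), ?_,
    fun hZ hvar ↦ hZ (hR.exists_ae_eq_const_of_tendsto_variance hR_L2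
      ((tendsto_add_atTop_iff_nat 1).2 hvar))⟩
  rw [integral_div, hmean, mul_div_cancel_left₀ μ hC.ne']

/-- Asymptotic unbiasedness (but inconsistency) of the estimator `∇̂⁽ᶜ⁾`:
`X_M / ((1/M)∑_{m=1}^M Ĉ_m)` converges in distribution (tested against bounded continuous
functions) to `X₁/C`, whose mean is `μ`; and the variance of the estimator does not tend
to `0` unless `X₁/C` is a.s. constant. Here `X_M = Ĉ_M · S_M` with `S_M` bounded. -/
theorem stmt3 {Ω : Type*} [MeasureSpace Ω] [IsProbabilityMeasure (ℙ : Measure Ω)]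
    (Chat S : ℕ → Ω → ℝ)
    (hChat_indep : iIndepFun Chat ℙ)
    (hChat_ident : ∀ m, IdentDistrib (Chat m) (Chat 1) ℙ ℙ)
    (hChat_pos : ∀ m, ∀ᵐ ω ∂ℙ, 0 < Chat m ω)
    (hChat_int : ∀ m, Integrable (Chat m) ℙ)
    (C μ : ℝ) (hC : 0 < C) (hEC : ∫ ω, Chat 1 ω ∂ℙ = C)
    (B : ℝ) (hS_bdd : ∀ m ω, |S m ω| ≤ B)
    (hpair_ident : ∀ m, 1 ≤ m → IdentDistrib (fun ω => (Chat m ω, S m ω))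
      (fun ω => (Chat 1 ω, S 1 ω)) ℙ ℙ)
    (hmean : ∫ ω, Chat 1 ω * S 1 ω ∂ℙ = C * μ)
    (hX_indep : ∀ M : ℕ, IndepFun (fun ω => Chat M ω * S M ω)
      (fun ω => fun i : Fin (M - 1) => Chat (i.1 + 1) ω) ℙ) :
    (∀ g : BoundedContinuousFunction ℝ ℝ,
      Tendsto (fun M : ℕ => ∫ ω, g ((Chat M ω * S M ω) /
          ((∑ m ∈ Finset.Icc 1 M, Chat m ω) / M)) ∂ℙ)
        atTop (nhds (∫ ω, g (Chat 1 ω * S 1 ω / C) ∂ℙ))) ∧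
    (∫ ω, Chat 1 ω * S 1 ω / C ∂ℙ = μ) ∧
    ((¬ ∃ c : ℝ, ∀ᵐ ω ∂ℙ, Chat 1 ω * S 1 ω / C = c) →
      ¬ Tendsto (fun M : ℕ => variance (fun ω => (Chat M ω * S M ω) /
          ((∑ m ∈ Finset.Icc 1 M, Chat m ω) / M)) ℙ) atTop (nhds 0)) :=
  stmt3_general Chat S hChat_indep hChat_ident hChat_pos hChat_int C μ hC hEC B hS_bdd hpair_ident
    hmean
end

section
/- For nonnegative reals V₁, …, V_K not all equal to +∞ and not all zero of the exponentials, define g(δ) = (∑ᵢ exp(-δVᵢ))² / ∑ᵢ exp(-2δVᵢ) for δ ≥ 0. Then g(0) = K, g is continuous, and if the Vᵢ are not all equal then g is strictly decreasing (toward the number of indices achieving min Vᵢ as δ → ∞); hence for any target E with (number of minimizers of V) < E < K there exists a unique δ > 0 with g(δ) = E. -/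
/-!
Write `g = ess ∘ w` with weights `wᵢ(δ) = exp(-δVᵢ)` and `ess w = (∑ wᵢ)² / ∑ wᵢ²`.
Differentiating, `g'(δ)` has the sign of `(∑ Vᵢwᵢ²)(∑ wᵢ) - (∑ Vᵢwᵢ)(∑ wᵢ²)`, which after
symmetrising in `i, j` is `-½ ∑ᵢⱼ (Vᵢ - Vⱼ)(wⱼ - wᵢ) wᵢwⱼ`; every term is `≥ 0` because `w` is
antitone in `V`, and some term is `> 0` unless `V` is constant. As `ess` is invariant under
scaling, `g(δ) = ess(exp(-δ(Vᵢ - min V)))`, and these weights tend to the indicator of the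
minimisers, whose `ess` is their number. The intermediate value theorem and strict
monotonicity then give the unique `δ`.
-/

open Filter Real Finset Topology
open scoped Classical

section

variable {ι : Type*} [Fintype ι]

noncomputable def effectiveSampleSize (w : ι → ℝ) : ℝ := (∑ i, w i) ^ 2 / ∑ i, w i ^ 2

lemma effectiveSampleSize_const_mul {c : ℝ} (hc : c ≠ 0) (w : ι → ℝ) :
    effectiveSampleSize (fun i => c * w i) = effectiveSampleSize w := by
  simp only [effectiveSampleSize, mul_pow, ← Finset.mul_sum]
  exact mul_div_mul_left _ _ (pow_ne_zero 2 hc)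

lemma effectiveSampleSize_boole (p : ι → Prop) [DecidablePred p] :
    effectiveSampleSize (fun i => if p i then (1 : ℝ) else 0) = #{i | p i} := by
  simp [effectiveSampleSize, Finset.sum_boole, sq, mul_self_div_self]

lemma continuousAt_effectiveSampleSize {w : ι → ℝ} (hw : ∑ i, w i ^ 2 ≠ 0) :
    ContinuousAt effectiveSampleSize w :=
  have hsum : Continuous fun w : ι → ℝ => ∑ i, w i :=
    continuous_finsetSum _ fun i _ => continuous_apply i
  have hsq : Continuous fun w : ι → ℝ => ∑ i, w i ^ 2 :=
    continuous_finsetSum _ fun i _ => (continuous_apply i).pow 2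
  (hsum.continuousAt.pow 2).div hsq.continuousAt hw

lemma sum_mul_sq_mul_sum_lt_sum_mul_mul_sum_sq {V a : ι → ℝ} (hpos : ∀ i, 0 < a i)
    (hanti : ∀ i j, V i < V j → a j < a i) (hV : ∃ i j, V i ≠ V j) :
    (∑ i, V i * a i ^ 2) * ∑ i, a i < (∑ i, V i * a i) * ∑ i, a i ^ 2 := by
  have hsymm : 2 * ((∑ i, V i * a i) * ∑ i, a i ^ 2 - (∑ i, V i * a i ^ 2) * ∑ i, a i)
      = ∑ i, ∑ j, (V i - V j) * (a j - a i) * (a i * a j) := by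
    calc _ = ∑ i, ∑ j, (V i * a i * a j ^ 2 - V i * a i ^ 2 * a j)
          + ∑ i, ∑ j, (V j * a j * a i ^ 2 - V j * a j ^ 2 * a i) := by
          rw [Finset.sum_comm (f := fun i j => V j * a j * a i ^ 2 - V j * a j ^ 2 * a i)]
          simp only [Finset.sum_mul_sum, ← Finset.sum_sub_distrib]
          ring
      _ = _ := by
          rw [← Finset.sum_add_distrib]
          refine Finset.sum_congr rfl fun i _ => ?_
          rw [← Finset.sum_add_distrib]
          exact Finset.sum_congr rfl fun j _ => by ring
  have hterm : ∀ i j, V i ≠ V j → 0 < (V i - V j) * (a j - a i) := by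
    intro i j h
    rcases h.lt_or_gt with h | h
    · exact mul_pos_of_neg_of_neg (sub_neg.2 h) (sub_neg.2 (hanti i j h))
    · exact mul_pos (sub_pos.2 h) (sub_pos.2 (hanti j i h))
  have hnonneg : ∀ i j, 0 ≤ (V i - V j) * (a j - a i) * (a i * a j) := by
    intro i j
    by_cases h : V i = V j
    · simp [h]
    · exact (mul_pos (hterm i j h) (mul_pos (hpos i) (hpos j))).le
  obtain ⟨i, j, hij⟩ := hV
  have : 0 < ∑ i, ∑ j, (V i - V j) * (a j - a i) * (a i * a j) :=
    Finset.sum_pos' (fun i _ => Finset.sum_nonneg fun j _ => hnonneg i j)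
      ⟨i, mem_univ _, Finset.sum_pos' (fun j _ => hnonneg i j)
        ⟨j, mem_univ _, mul_pos (hterm i j hij) (mul_pos (hpos i) (hpos j))⟩⟩
  linarith

noncomputable def temperedESS (V : ι → ℝ) (δ : ℝ) : ℝ :=
  (∑ i, exp (-δ * V i)) ^ 2 / ∑ i, exp (-2 * δ * V i)

lemma exp_neg_two_mul_mul (δ v : ℝ) : exp (-2 * δ * v) = exp (-δ * v) ^ 2 := by
  rw [← Real.exp_nat_mul]
  push_cast
  ring_nf

lemma temperedESS_eq_effectiveSampleSize (V : ι → ℝ) (δ : ℝ) :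
    temperedESS V δ = effectiveSampleSize fun i => exp (-δ * V i) := by
  simp only [temperedESS, effectiveSampleSize, exp_neg_two_mul_mul]

lemma temperedESS_zero (V : ι → ℝ) : temperedESS V 0 = Fintype.card ι := by
  simp [temperedESS, sq, mul_self_div_self]

lemma continuous_temperedESS (V : ι → ℝ) : Continuous (temperedESS V) := by
  rcases isEmpty_or_nonempty ι with hι | hι
  · rw [show temperedESS V = fun _ => 0 from funext fun δ => by simp [temperedESS]]
    exact continuous_const
  refine continuous_iff_continuousAt.2 fun δ => ?_
  simp only [funext (temperedESS_eq_effectiveSampleSize V)]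
  have hw : Continuous fun δ (i : ι) => exp (-δ * V i) := by fun_prop
  refine (continuousAt_effectiveSampleSize ?_).comp hw.continuousAt
  exact (Finset.sum_pos (fun i _ => by positivity) univ_nonempty).ne'

lemma hasDerivAt_exp_neg_mul (v δ : ℝ) :
    HasDerivAt (fun x => exp (-x * v)) (-(v * exp (-δ * v))) δ := by
  convert ((hasDerivAt_neg δ).mul_const v).exp using 1
  ring

lemma deriv_temperedESS_neg {V : ι → ℝ} (hV : ∃ i j, V i ≠ V j) {δ : ℝ} (hδ : 0 < δ) :
    deriv (temperedESS V) δ < 0 := by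
  have hι : Nonempty ι := let ⟨i, _⟩ := hV; ⟨i⟩
  have hS₁ : HasDerivAt (fun x => ∑ i, exp (-x * V i)) (-∑ i, V i * exp (-δ * V i)) δ := by
    rw [← Finset.sum_neg_distrib]
    exact HasDerivAt.fun_sum fun i _ => hasDerivAt_exp_neg_mul (V i) δ
  have hS₂ : HasDerivAt (fun x => ∑ i, exp (-x * V i) ^ 2)
      (-(2 * ∑ i, V i * exp (-δ * V i) ^ 2)) δ := by
    rw [Finset.mul_sum, ← Finset.sum_neg_distrib]
    exact HasDerivAt.fun_sum fun i _ =>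
      ((hasDerivAt_exp_neg_mul (V i) δ).pow 2).congr_deriv (by ring)
  have hsum_pos : 0 < ∑ i, exp (-δ * V i) :=
    Finset.sum_pos (fun i _ => exp_pos _) univ_nonempty
  have hsq_pos : 0 < ∑ i, exp (-δ * V i) ^ 2 :=
    Finset.sum_pos (fun i _ => by positivity) univ_nonempty
  have hESS : temperedESS V = fun x => (∑ i, exp (-x * V i)) ^ 2 / ∑ i, exp (-x * V i) ^ 2 :=
    funext (temperedESS_eq_effectiveSampleSize V)
  rw [hESS, ((hS₁.fun_pow 2).fun_div hS₂ hsq_pos.ne').deriv]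
  refine div_neg_of_neg_of_pos ?_ (pow_pos hsq_pos 2)
  have hcheb := sum_mul_sq_mul_sum_lt_sum_mul_mul_sum_sq (V := V)
    (a := fun i => exp (-δ * V i)) (fun i => exp_pos _)
    (fun i j h => exp_lt_exp.2 (by nlinarith)) hV
  norm_num only [pow_one]
  nlinarith [mul_pos hsum_pos (sub_pos.2 hcheb)]

lemma strictAntiOn_temperedESS {V : ι → ℝ} (hV : ∃ i j, V i ≠ V j) :
    StrictAntiOn (temperedESS V) (Set.Ici 0) :=
  strictAntiOn_of_deriv_neg (convex_Ici 0) (continuous_temperedESS V).continuousOn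
    fun δ hδ => deriv_temperedESS_neg hV (by simpa using hδ)

lemma tendsto_temperedESS_atTop [Nonempty ι] (V : ι → ℝ) :
    Tendsto (temperedESS V) atTop (𝓝 (#{i | ∀ j, V i ≤ V j} : ℝ)) := by
  obtain ⟨i₀, hi₀⟩ := Finite.exists_min V
  have hmin : ∀ i, (∀ j, V i ≤ V j) ↔ V i = V i₀ :=
    fun i => ⟨fun h => le_antisymm (h i₀) (hi₀ i), fun h j => h ▸ hi₀ j⟩
  have hscale :
      ∀ δ, effectiveSampleSize (fun i => exp (-δ * (V i - V i₀))) = temperedESS V δ := by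
    intro δ
    rw [temperedESS_eq_effectiveSampleSize,
      ← effectiveSampleSize_const_mul (exp_ne_zero (-δ * V i₀))]
    congr 1
    funext i
    rw [← exp_add]
    ring_nf
  have hlim : ∀ i, Tendsto (fun δ => exp (-δ * (V i - V i₀))) atTop
      (𝓝 (if ∀ j, V i ≤ V j then 1 else 0)) := by
    intro i
    split_ifs with h
    · simp [(hmin i).1 h]
    · have hgap : 0 < V i - V i₀ :=
        sub_pos.2 ((hi₀ i).lt_of_ne fun h' => h ((hmin i).2 h'.symm))
      exact tendsto_exp_atBot.comp (tendsto_neg_atTop_atBot.atBot_mul_const hgap)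
  have hne : ∑ i, (if ∀ j, V i ≤ V j then (1 : ℝ) else 0) ^ 2 ≠ 0 := by
    simpa [Finset.sum_boole] using ⟨i₀, hi₀⟩
  rw [← effectiveSampleSize_boole]
  exact ((continuousAt_effectiveSampleSize hne).tendsto.comp
    (tendsto_pi_nhds.2 hlim)).congr hscale

end

lemma StrictAntiOn.existsUnique_pos_eq_of_tendsto {g : ℝ → ℝ} {L E : ℝ}
    (hcont : ContinuousOn g (Set.Ici 0)) (hanti : StrictAntiOn g (Set.Ici 0))
    (hlim : Tendsto g atTop (𝓝 L)) (hLE : L < E) (hE : E < g 0) :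
    ∃! δ, 0 < δ ∧ g δ = E := by
  obtain ⟨δ₁, hδ₁E, hδ₁⟩ := ((hlim.eventually_lt_const hLE).and (eventually_gt_atTop 0)).exists
  obtain ⟨δ, ⟨hδ₀, -⟩, hδE⟩ := intermediate_value_Icc' hδ₁.le
    (hcont.mono Set.Icc_subset_Ici_self) ⟨hδ₁E.le, hE.le⟩
  have hδ : 0 < δ := hδ₀.lt_of_ne fun h => hE.ne' (h ▸ hδE)
  exact ⟨δ, ⟨hδ, hδE⟩, fun y hy => hanti.injOn hy.1.le hδ.le (hy.2.trans hδE.symm)⟩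

theorem stmt12_general (K : ℕ) (V : Fin K → ℝ) :
    let g : ℝ → ℝ := fun δ =>
      (∑ i, Real.exp (-δ * V i)) ^ 2 / ∑ i, Real.exp (-2 * δ * V i);
    let Nmin : ℝ := ((Finset.univ.filter fun i => ∀ j, V i ≤ V j).card : ℝ);
    g 0 = K ∧ Continuous g ∧
      ((¬ ∀ i j, V i = V j) →
        StrictAntiOn g (Set.Ici 0) ∧
        Tendsto g atTop (nhds Nmin) ∧
        ∀ E : ℝ, Nmin < E → E < K → ∃! δ : ℝ, 0 < δ ∧ g δ = E) := by
  intro g Nmin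
  have hg0 : g 0 = K := (temperedESS_zero V).trans (by rw [Fintype.card_fin])
  refine ⟨hg0, continuous_temperedESS V, fun hV => ?_⟩
  push Not at hV
  have : Nonempty (Fin K) := let ⟨i, _⟩ := hV; ⟨i⟩
  have hanti : StrictAntiOn g (Set.Ici 0) := strictAntiOn_temperedESS hV
  have hlim : Tendsto g atTop (𝓝 Nmin) := by
    show Tendsto (temperedESS V) atTop _
    -- `Nmin` decides its filter by a different (propositionally equal) instance
    convert tendsto_temperedESS_atTop V
  exact ⟨hanti, hlim, fun E hE hEK => hanti.existsUnique_pos_eq_of_tendsto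
    (continuous_temperedESS V).continuousOn hlim hE (hg0 ▸ hEK)⟩

/-- Adaptive tempering: for nonnegative `V₁, …, V_K`, the ESS function
`g(δ) = (∑ exp(-δVᵢ))² / ∑ exp(-2δVᵢ)` satisfies `g(0) = K`, is continuous, and — if the
`Vᵢ` are not all equal — is strictly decreasing on `[0, ∞)` with limit the number of
minimizers of `V` as `δ → ∞`; hence for any target `E` strictly between the number of
minimizers and `K` there exists a unique `δ > 0` with `g(δ) = E`. -/
theorem stmt12 (K : ℕ) (hK : 0 < K) (V : Fin K → ℝ) (hV_nonneg : ∀ i, 0 ≤ V i) :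
    let g : ℝ → ℝ := fun δ =>
      (∑ i, Real.exp (-δ * V i)) ^ 2 / ∑ i, Real.exp (-2 * δ * V i);
    let Nmin : ℝ := ((Finset.univ.filter fun i => ∀ j, V i ≤ V j).card : ℝ);
    g 0 = K ∧ Continuous g ∧
      ((¬ ∀ i j, V i = V j) →
        StrictAntiOn g (Set.Ici 0) ∧
        Tendsto g atTop (nhds Nmin) ∧
        ∀ E : ℝ, Nmin < E → E < K → ∃! δ : ℝ, 0 < δ ∧ g δ = E) :=
  stmt12_general K V
end
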